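/- arXiv:2004.05157 — 6 statements merged into one kernel-verified Lean document; each statement's English description precedes it below -/
import Mathlib

section
/- Let k ≥ 3 be an integer and define a : ℕ → ℕ by a(0) = k and a(n+1) = a(n)·(a(n) − 1). Then the sequence a(n)^{1/2^n} is strictly decreasing, hence converges to a limit θ_k, this limit satisfies 2.33 < θ_k < k, and moreover a(n) > θ_k^{2^n} for all n ≥ 0. -/
/-!
Since `a (n + 1) = a n * (a n - 1)` lies strictly between `(a n - 1) ^ 2` and `a n ^ 2`, the
`2 ^ (n + 1)`-th root of `a (n + 1)` lies strictly below the `2 ^ n`-th root of `a n`, while the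
`2 ^ n`-th roots of `a n - 1` increase. So the roots of `a n` decrease to a limit `θ` squeezed
between the two sequences: `θ < a 0 = k`, `θ ^ 2 ^ n < a n`, and `θ ≥ (a 3 - 1) ^ (1 / 8) ≥ 869 ^ (1 / 8)`,
which exceeds `2.33` since `2.33 ^ 8 ≈ 868.7` (the term `a 2 - 1 ≥ 29` would not suffice).
-/

open Filter Topology

lemma rpow_one_div_two_pow_pow {x : ℝ} (hx : 0 ≤ x) (n : ℕ) :
    (x ^ ((1 : ℝ) / 2 ^ n)) ^ 2 ^ n = x := by
  simpa [one_div] using Real.rpow_inv_natCast_pow hx (pow_ne_zero n two_ne_zero)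

lemma sq_rpow_one_div_two_pow_succ {x : ℝ} (hx : 0 ≤ x) (n : ℕ) :
    (x ^ 2) ^ ((1 : ℝ) / 2 ^ (n + 1)) = x ^ ((1 : ℝ) / 2 ^ n) := by
  rw [← Real.rpow_natCast, ← Real.rpow_mul hx]
  congr 1
  push_cast
  field_simp
  ring

lemma strictAnti_rpow_one_div_two_pow {u : ℕ → ℝ} (hu : ∀ n, 0 ≤ u n)
    (hlt : ∀ n, u (n + 1) < u n ^ 2) :
    StrictAnti fun n => u n ^ ((1 : ℝ) / 2 ^ n) := by
  refine strictAnti_nat_of_succ_lt fun n => ?_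
  rw [← sq_rpow_one_div_two_pow_succ (hu n)]
  exact Real.rpow_lt_rpow (hu _) (hlt n) (by positivity)

lemma monotone_rpow_one_div_two_pow {u : ℕ → ℝ} (hu : ∀ n, 0 ≤ u n)
    (hle : ∀ n, u n ^ 2 ≤ u (n + 1)) :
    Monotone fun n => u n ^ ((1 : ℝ) / 2 ^ n) := by
  refine monotone_nat_of_le_succ fun n => ?_
  rw [← sq_rpow_one_div_two_pow_succ (hu n)]
  exact Real.rpow_le_rpow (by positivity) (hle n) (by positivity)

lemma exists_tendsto_of_strictAnti_of_monotone_le {b c : ℕ → ℝ} (hb : StrictAnti b)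
    (hc : Monotone c) (hcb : ∀ n, c n ≤ b n) :
    ∃ θ, Tendsto b atTop (𝓝 θ) ∧ (∀ n, θ < b n) ∧ ∀ n, c n ≤ θ := by
  have hbdd : BddBelow (Set.range b) := ⟨c 0, by
    rintro _ ⟨n, rfl⟩
    exact (hc n.zero_le).trans (hcb n)⟩
  have hT := tendsto_atTop_ciInf hb.antitone hbdd
  refine ⟨_, hT, fun n => (hb.antitone.le_of_tendsto hT (n + 1)).trans_lt (hb n.lt_succ_self),
    fun n => ge_of_tendsto hT ?_⟩
  filter_upwards [eventually_ge_atTop n] with m hm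
  exact (hc hm).trans (hcb m)

lemma Nat.cast_mul_sub_one {R : Type*} [Ring R] (m : ℕ) :
    ((m * (m - 1) : ℕ) : R) = m * (m - 1) := by
  rcases m with _ | m <;> simp

section Recurrence

variable {x : ℕ → ℝ} (hx : ∀ n, x (n + 1) = x n * (x n - 1))
include hx

lemma mul_sub_one_le_of_le {t : ℝ} (ht : 1 ≤ t) {n : ℕ} (h : t ≤ x n) :
    t * (t - 1) ≤ x (n + 1) := by
  rw [hx]
  nlinarith

lemma two_le_of_two_le_zero (h0 : 2 ≤ x 0) (n : ℕ) : 2 ≤ x n := by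
  induction n with
  | zero => exact h0
  | succ n ih => linarith [mul_sub_one_le_of_le hx one_le_two ih]

lemma succ_lt_sq {n : ℕ} (h : 0 < x n) : x (n + 1) < x n ^ 2 := by
  rw [hx]
  nlinarith

lemma sub_one_sq_le_succ_sub_one {n : ℕ} (h : 2 ≤ x n) : (x n - 1) ^ 2 ≤ x (n + 1) - 1 := by
  rw [hx]
  nlinarith

lemma le_three_of_three_le_zero (h0 : 3 ≤ x 0) : 870 ≤ x 3 := by
  have h1 : 6 ≤ x 1 := by linarith [mul_sub_one_le_of_le hx (by norm_num) h0]
  have h2 : 30 ≤ x 2 := by linarith [mul_sub_one_le_of_le hx (by norm_num) h1]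
  linarith [mul_sub_one_le_of_le hx (by norm_num) h2]

end Recurrence

/-- **Asymptotics of wild generation sizes** (Lemma on wild flies, parts i–ii):
if `a 0 = k ≥ 3` and `a (n+1) = a n * (a n - 1)`, then the sequence
`a(n)^(1/2^n)` is strictly decreasing, hence converges to a limit `θ_k` with
`2.33 < θ_k < k`, and `θ_k^(2^n) < a n` for all `n`. -/
theorem wild_flies_asymptotics (k : ℕ) (hk : 3 ≤ k) (a : ℕ → ℕ)
    (ha0 : a 0 = k) (ha : ∀ n, a (n + 1) = a n * (a n - 1)) :
    StrictAnti (fun n : ℕ => (a n : ℝ) ^ ((1 : ℝ) / 2 ^ n)) ∧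
    ∃ θ : ℝ,
      Filter.Tendsto (fun n : ℕ => (a n : ℝ) ^ ((1 : ℝ) / 2 ^ n))
        Filter.atTop (nhds θ) ∧
      (2.33 : ℝ) < θ ∧ θ < (k : ℝ) ∧
      ∀ n : ℕ, θ ^ (2 ^ n) < (a n : ℝ) := by
  set x : ℕ → ℝ := fun n => (a n : ℝ)
  have hx : ∀ n, x (n + 1) = x n * (x n - 1) := fun n => by
    simp only [x, ha, Nat.cast_mul_sub_one]
  have h0 : (3 : ℝ) ≤ x 0 := by simp [x, ha0, hk]
  have h2 := two_le_of_two_le_zero hx (by linarith)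
  have hanti : StrictAnti fun n => x n ^ ((1 : ℝ) / 2 ^ n) :=
    strictAnti_rpow_one_div_two_pow (fun n => by linarith [h2 n])
      fun n => succ_lt_sq hx (by linarith [h2 n])
  have hmono : Monotone fun n => (x n - 1) ^ ((1 : ℝ) / 2 ^ n) :=
    monotone_rpow_one_div_two_pow (fun n => by linarith [h2 n])
      fun n => by linarith [sub_one_sq_le_succ_sub_one hx (h2 n)]
  obtain ⟨θ, hT, hθb, hcθ⟩ := exists_tendsto_of_strictAnti_of_monotone_le hanti hmono
    fun n => Real.rpow_le_rpow (by linarith [h2 n]) (by linarith) (by positivity)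
  have h233 : (2.33 : ℝ) < (x 3 - 1) ^ ((1 : ℝ) / 2 ^ 3) := by
    refine lt_of_pow_lt_pow_left₀ (2 ^ 3) (Real.rpow_nonneg (by linarith [h2 3]) _) ?_
    rw [rpow_one_div_two_pow_pow (by linarith [h2 3])]
    linarith [le_three_of_three_le_zero hx h0]
  have hθ : (2.33 : ℝ) < θ := h233.trans_le (hcθ 3)
  refine ⟨hanti, θ, hT, hθ, by simpa [x, ha0] using hθb 0, fun n => ?_⟩
  calc θ ^ 2 ^ n < (x n ^ ((1 : ℝ) / 2 ^ n)) ^ 2 ^ n :=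
        pow_lt_pow_left₀ (hθb n) (by linarith) (by positivity)
    _ = x n := rpow_one_div_two_pow_pow (by linarith [h2 n]) n
end

section
/- Let k ≥ 3 be an integer, define a : ℕ → ℕ by a(0) = k and a(n+1) = a(n)·(a(n) − 1), and let θ_k = lim_{n→∞} a(n)^{1/2^n}. Then: (i) for every ε > 0 there exists n₀ such that a(n) < (θ_k + ε)^{2^n} for all n ≥ n₀; and (ii) the partial sums A(n) = a(0) + a(1) + ⋯ + a(n) satisfy A(n) = (θ_k + o(1))^{2^n} as n → ∞, i.e. A(n)^{1/2^n} → θ_k. -/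
open Filter Real Topology Finset

/-!
The sequence `a` is increasing, so `a n ≤ A n ≤ (n + 1) a n`; since `(n + 1) ^ (1 / 2 ^ n) → 1`,
the `2 ^ n`-th roots of `A n` are squeezed to the same limit `θ` as those of `a n`.
-/

theorem two_le_of_succ_eq_mul_pred {a : ℕ → ℕ} (ha : ∀ n, a (n + 1) = a n * (a n - 1))
    (h0 : 2 ≤ a 0) (n : ℕ) : 2 ≤ a n := by
  induction n with
  | zero => exact h0
  | succ n ih => rw [ha]; exact ih.trans (Nat.le_mul_of_pos_right _ (by omega))

theorem monotone_of_succ_eq_mul_pred {a : ℕ → ℕ} (ha : ∀ n, a (n + 1) = a n * (a n - 1))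
    (h0 : 2 ≤ a 0) : Monotone a :=
  monotone_nat_of_le_succ fun n => by
    rw [ha]
    exact Nat.le_mul_of_pos_right _ (by have := two_le_of_succ_eq_mul_pred ha h0 n; omega)

section RootsOfOrderTwoPow

variable {x : ℕ → ℝ} {θ : ℝ}

theorem Real.eventually_lt_pow_two_pow_of_tendsto_rpow (hx : ∀ n, 0 ≤ x n)
    (h : Tendsto (fun n => x n ^ ((1 : ℝ) / 2 ^ n)) atTop (𝓝 θ)) {ε : ℝ} (hε : 0 < ε) :
    ∀ᶠ n in atTop, x n < (θ + ε) ^ (2 ^ n) := by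
  have hθ : 0 ≤ θ := ge_of_tendsto' h fun n => rpow_nonneg (hx n) _
  filter_upwards [h.eventually (eventually_lt_nhds (lt_add_of_pos_right θ hε))] with n hn
  rwa [one_div, rpow_inv_lt_iff_of_pos (hx n) (by linarith) (by positivity),
    ← Nat.cast_ofNat, ← Nat.cast_pow, rpow_natCast] at hn

theorem Real.tendsto_natCast_add_one_rpow_one_div_two_pow :
    Tendsto (fun n : ℕ => ((n : ℝ) + 1) ^ ((1 : ℝ) / 2 ^ n)) atTop (𝓝 1) := by
  have hroot : Tendsto (fun n : ℕ => ((n : ℝ) + 1) ^ ((1 : ℝ) / ((n : ℝ) + 1))) atTop (𝓝 1) :=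
    tendsto_rpow_div.comp (tendsto_atTop_add_const_right _ 1 tendsto_natCast_atTop_atTop)
  refine tendsto_of_tendsto_of_tendsto_of_le_of_le tendsto_const_nhds hroot
    (fun n => one_le_rpow (by simp) (by positivity)) fun n => ?_
  refine rpow_le_rpow_of_exponent_le (by simp) (one_div_le_one_div_of_le (by positivity) ?_)
  exact_mod_cast Nat.lt_two_pow_self

theorem Real.tendsto_sum_range_rpow_one_div_two_pow_of_monotone (h0 : 0 ≤ x 0)
    (hmono : Monotone x) (h : Tendsto (fun n => x n ^ ((1 : ℝ) / 2 ^ n)) atTop (𝓝 θ)) :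
    Tendsto (fun n => (∑ m ∈ range (n + 1), x m) ^ ((1 : ℝ) / 2 ^ n)) atTop (𝓝 θ) := by
  have hx (n : ℕ) : 0 ≤ x n := h0.trans (hmono n.zero_le)
  have hlower (n : ℕ) : x n ≤ ∑ m ∈ range (n + 1), x m :=
    single_le_sum (fun m _ => hx m) (self_mem_range_succ n)
  have hupper (n : ℕ) : ∑ m ∈ range (n + 1), x m ≤ ((n : ℝ) + 1) * x n := by
    simpa using sum_le_card_nsmul (range (n + 1)) x (x n)
      fun m hm => hmono (Nat.lt_succ_iff.mp (mem_range.mp hm))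
  have hprod := tendsto_natCast_add_one_rpow_one_div_two_pow.mul h
  rw [one_mul] at hprod
  refine tendsto_of_tendsto_of_tendsto_of_le_of_le h hprod
    (fun n => rpow_le_rpow (hx n) (hlower n) (by positivity)) fun n => ?_
  rw [← mul_rpow (by positivity) (hx n)]
  exact rpow_le_rpow ((hx n).trans (hlower n)) (hupper n) (by positivity)

end RootsOfOrderTwoPow

/-- **Asymptotics of wild generation sizes** (Lemma on wild flies, parts iii–iv):
if `a 0 = k ≥ 3`, `a (n+1) = a n * (a n - 1)`, and `θ_k` is the limit of
`a(n)^(1/2^n)`, then (i) for every `ε > 0` eventually `a n < (θ_k + ε)^(2^n)`, and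
(ii) the partial sums `A n = a 0 + ⋯ + a n` satisfy `A(n)^(1/2^n) → θ_k`. -/
theorem wild_flies_upper_asymptotics (k : ℕ) (hk : 3 ≤ k) (a : ℕ → ℕ)
    (ha0 : a 0 = k) (ha : ∀ n, a (n + 1) = a n * (a n - 1)) (θ : ℝ)
    (hθ : Filter.Tendsto (fun n : ℕ => (a n : ℝ) ^ ((1 : ℝ) / 2 ^ n))
      Filter.atTop (nhds θ)) :
    (∀ ε > (0 : ℝ), ∃ n₀ : ℕ, ∀ n : ℕ, n₀ ≤ n → (a n : ℝ) < (θ + ε) ^ (2 ^ n)) ∧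
    Filter.Tendsto
      (fun n : ℕ => (∑ m ∈ Finset.range (n + 1), (a m : ℝ)) ^ ((1 : ℝ) / 2 ^ n))
      Filter.atTop (nhds θ) := by
  have hmono : Monotone a := monotone_of_succ_eq_mul_pred ha (by omega)
  refine ⟨fun ε hε => ?_, ?_⟩
  · exact (eventually_lt_pow_two_pow_of_tendsto_rpow (fun n => by positivity) hθ hε
      ).exists_forall_of_atTop
  · exact tendsto_sum_range_rpow_one_div_two_pow_of_monotone (by positivity)
      (Nat.mono_cast.comp hmono) hθ
end

section
/- Let k ≥ 3 be an integer, define a : ℕ → ℕ by a(0) = k and a(n+1) = a(n)·(a(n) − 1), let θ_k = lim_{n→∞} a(n)^{1/2^n}, and for n ≥ 1 set γ(n) = 1 + Σ_{m=0}^{⌊log₂ n⌋} a(m). Then liminf_{n→∞} γ(n)^{1/n} = √θ_k and limsup_{n→∞} γ(n)^{1/n} = θ_k. -/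
/-!
Put `u n = a n ^ (1 / 2 ^ n)`. The recursion gives `a (n + 1) ≤ a n ^ 2` and
`(a n / 2) ^ 2 ≤ a (n + 1) / 2`, so `u` decreases to `θ` while `(a n / 2) ^ (1 / 2 ^ n)` increases
to `θ`; hence `θ ^ 2 ^ m ≤ a m ≤ 2 * θ ^ 2 ^ m`. The sum defining `γ n` is then its last term
`a ⌊log₂ n⌋` up to a factor `O(n)`, so `γ n ^ (1 / n)` is `θ ^ (2 ^ ⌊log₂ n⌋ / n)` up to a factor
tending to `1`. The exponent `2 ^ ⌊log₂ n⌋ / n` lies in `[1/2, 1]`, equals `1` at `n = 2 ^ N` and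
tends to `1/2` along `n = 2 ^ (N + 1) - 1`.
-/

open Filter Real Topology

namespace WildFlies

section DoublyExponential

lemma rpow_one_div_two_pow_pow {x : ℝ} (hx : 0 ≤ x) (m : ℕ) :
    (x ^ ((1 : ℝ) / 2 ^ m)) ^ 2 ^ m = x := by
  simpa using rpow_inv_natCast_pow hx (pow_ne_zero m two_ne_zero)

lemma rpow_one_div_two_pow_eq_sq_rpow {x : ℝ} (hx : 0 ≤ x) (m : ℕ) :
    x ^ ((1 : ℝ) / 2 ^ m) = (x ^ 2) ^ ((1 : ℝ) / 2 ^ (m + 1)) := by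
  rw [← rpow_natCast x 2, ← rpow_mul hx, pow_succ]
  congr 1
  field_simp
  norm_num

variable {x : ℕ → ℝ} {θ : ℝ}

lemma antitone_rpow_one_div_two_pow (hx : ∀ n, 0 ≤ x n) (h : ∀ n, x (n + 1) ≤ x n ^ 2) :
    Antitone fun n => x n ^ ((1 : ℝ) / 2 ^ n) :=
  antitone_nat_of_succ_le fun n => by
    rw [rpow_one_div_two_pow_eq_sq_rpow (hx n)]
    exact rpow_le_rpow (hx _) (h n) (by positivity)

lemma monotone_rpow_one_div_two_pow (hx : ∀ n, 0 ≤ x n) (h : ∀ n, x n ^ 2 ≤ x (n + 1)) :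
    Monotone fun n => x n ^ ((1 : ℝ) / 2 ^ n) :=
  monotone_nat_of_le_succ fun n => by
    rw [rpow_one_div_two_pow_eq_sq_rpow (hx n)]
    exact rpow_le_rpow (sq_nonneg _) (h n) (by positivity)

lemma pow_two_pow_le_of_tendsto (hx : ∀ n, 0 ≤ x n) (h : ∀ n, x (n + 1) ≤ x n ^ 2)
    (hθ : Tendsto (fun n => x n ^ ((1 : ℝ) / 2 ^ n)) atTop (𝓝 θ)) (m : ℕ) :
    θ ^ 2 ^ m ≤ x m := by
  have hθ_nonneg : 0 ≤ θ := ge_of_tendsto' hθ fun n => rpow_nonneg (hx n) _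
  calc θ ^ 2 ^ m ≤ (x m ^ ((1 : ℝ) / 2 ^ m)) ^ 2 ^ m :=
        pow_le_pow_left₀ hθ_nonneg ((antitone_rpow_one_div_two_pow hx h).le_of_tendsto hθ m) _
    _ = x m := rpow_one_div_two_pow_pow (hx m) m

lemma le_pow_two_pow_of_tendsto (hx : ∀ n, 0 ≤ x n) (h : ∀ n, x n ^ 2 ≤ x (n + 1))
    (hθ : Tendsto (fun n => x n ^ ((1 : ℝ) / 2 ^ n)) atTop (𝓝 θ)) (m : ℕ) :
    x m ≤ θ ^ 2 ^ m :=
  calc x m = (x m ^ ((1 : ℝ) / 2 ^ m)) ^ 2 ^ m := (rpow_one_div_two_pow_pow (hx m) m).symm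
    _ ≤ θ ^ 2 ^ m := pow_le_pow_left₀ (rpow_nonneg (hx m) _)
        ((monotone_rpow_one_div_two_pow hx h).ge_of_tendsto hθ m) _

end DoublyExponential

section SuccEqMulPred

variable {a : ℕ → ℕ} {θ : ℝ}

lemma two_le_of_succ_eq_mul_pred (h0 : 2 ≤ a 0) (ha : ∀ n, a (n + 1) = a n * (a n - 1)) (n : ℕ) :
    2 ≤ a n := by
  induction n with
  | zero => exact h0
  | succ n ih => rw [ha]; nlinarith [Nat.sub_add_cancel (one_le_two.trans ih)]

lemma cast_succ_eq_mul_pred (h0 : 2 ≤ a 0) (ha : ∀ n, a (n + 1) = a n * (a n - 1)) (n : ℕ) :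
    (a (n + 1) : ℝ) = a n * (a n - 1) := by
  have := two_le_of_succ_eq_mul_pred h0 ha n
  rw [ha, Nat.cast_mul, Nat.cast_pred (by omega)]

lemma pow_two_pow_le_of_succ_eq_mul_pred (h0 : 2 ≤ a 0) (ha : ∀ n, a (n + 1) = a n * (a n - 1))
    (hθ : Tendsto (fun n => (a n : ℝ) ^ ((1 : ℝ) / 2 ^ n)) atTop (𝓝 θ)) (m : ℕ) :
    θ ^ 2 ^ m ≤ a m :=
  pow_two_pow_le_of_tendsto (fun n => Nat.cast_nonneg _)
    (fun n => by rw [cast_succ_eq_mul_pred h0 ha]; nlinarith [Nat.cast_nonneg (α := ℝ) (a n)])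
    hθ m

lemma le_two_mul_pow_two_pow_of_succ_eq_mul_pred (h0 : 2 ≤ a 0)
    (ha : ∀ n, a (n + 1) = a n * (a n - 1))
    (hθ : Tendsto (fun n => (a n : ℝ) ^ ((1 : ℝ) / 2 ^ n)) atTop (𝓝 θ)) (m : ℕ) :
    (a m : ℝ) ≤ 2 * θ ^ 2 ^ m := by
  have hhalf : Tendsto (fun n => ((a n : ℝ) / 2) ^ ((1 : ℝ) / 2 ^ n)) atTop (𝓝 θ) := by
    have htwo : Tendsto (fun n : ℕ => (2 : ℝ) ^ ((1 : ℝ) / 2 ^ n)) atTop (𝓝 1) := by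
      have hexp : Tendsto (fun n : ℕ => (1 : ℝ) / 2 ^ n) atTop (𝓝 0) := by
        simpa using tendsto_pow_atTop_nhds_zero_of_lt_one (by norm_num : (0 : ℝ) ≤ 1 / 2)
          (by norm_num)
      simpa using tendsto_const_nhds.rpow hexp (Or.inl two_ne_zero)
    refine (div_one θ ▸ hθ.div htwo one_ne_zero).congr fun n => ?_
    exact (div_rpow (Nat.cast_nonneg _) zero_le_two _).symm
  have hsq (n : ℕ) : ((a n : ℝ) / 2) ^ 2 ≤ a (n + 1) / 2 := by
    have := two_le_of_succ_eq_mul_pred h0 ha n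
    rw [cast_succ_eq_mul_pred h0 ha]
    nlinarith [(Nat.ofNat_le_cast (α := ℝ)).mpr this]
  have := le_pow_two_pow_of_tendsto (fun n => by positivity) hsq hhalf m
  linarith

lemma one_le_of_succ_eq_mul_pred (h0 : 2 ≤ a 0) (ha : ∀ n, a (n + 1) = a n * (a n - 1))
    (hθ : Tendsto (fun n => (a n : ℝ) ^ ((1 : ℝ) / 2 ^ n)) atTop (𝓝 θ)) : 1 ≤ θ := by
  have hle := le_two_mul_pow_two_pow_of_succ_eq_mul_pred h0 ha hθ 0
  have : (2 : ℝ) ≤ a 0 := by exact_mod_cast h0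
  rw [pow_zero, pow_one] at hle
  linarith

end SuccEqMulPred

lemma one_add_sum_le_of_le_two_mul_pow {b : ℕ → ℝ} {θ : ℝ} (hθ : 1 ≤ θ)
    (hb : ∀ m, b m ≤ 2 * θ ^ 2 ^ m) (L : ℕ) :
    1 + ∑ m ∈ Finset.range (L + 1), b m ≤ 3 * (L + 1) * θ ^ 2 ^ L := by
  have hone : 1 ≤ θ ^ 2 ^ L := one_le_pow₀ hθ
  have hsum : ∑ m ∈ Finset.range (L + 1), b m ≤ (L + 1) * (2 * θ ^ 2 ^ L) := by
    have hle : ∀ m ∈ Finset.range (L + 1), b m ≤ 2 * θ ^ 2 ^ L := fun m hm =>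
      (hb m).trans <| by gcongr; exacts [one_le_two, Nat.lt_succ_iff.mp (Finset.mem_range.mp hm)]
    simpa using Finset.sum_le_card_nsmul _ _ _ hle
  nlinarith [(Nat.cast_nonneg L : (0 : ℝ) ≤ L)]

section DyadicRatio

noncomputable def dyadicRatio (n : ℕ) : ℝ := 2 ^ Nat.log 2 n / n

lemma dyadicRatio_le_one (n : ℕ) : dyadicRatio n ≤ 1 := by
  rcases Nat.eq_zero_or_pos n with rfl | hn
  · simp [dyadicRatio]
  rw [dyadicRatio, div_le_one (by positivity)]
  exact_mod_cast Nat.pow_log_le_self 2 hn.ne'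

lemma one_half_le_dyadicRatio {n : ℕ} (hn : 1 ≤ n) : 1 / 2 ≤ dyadicRatio n := by
  rw [dyadicRatio, div_le_div_iff₀ two_pos (by positivity), one_mul, ← pow_succ]
  exact_mod_cast (Nat.lt_pow_succ_log_self one_lt_two n).le

lemma dyadicRatio_two_pow (N : ℕ) : dyadicRatio (2 ^ N) = 1 := by
  rw [dyadicRatio, Nat.log_pow one_lt_two, Nat.cast_pow, Nat.cast_ofNat, div_self (by positivity)]

lemma log_two_pow_succ_sub_one (M : ℕ) : Nat.log 2 (2 ^ (M + 1) - 1) = M := by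
  have := Nat.one_le_two_pow (n := M)
  refine Nat.log_eq_of_pow_le_of_lt_pow ?_ ?_ <;> rw [pow_succ] <;> omega

lemma tendsto_dyadicRatio_two_pow_succ_sub_one :
    Tendsto (fun M => dyadicRatio (2 ^ (M + 1) - 1)) atTop (𝓝 (1 / 2)) := by
  have hinv : Tendsto (fun M : ℕ => (2 - ((2 : ℝ) ^ M)⁻¹)⁻¹) atTop (𝓝 (2 - 0)⁻¹) :=
    (tendsto_const_nhds.sub (tendsto_inv_atTop_zero.comp
      (tendsto_pow_atTop_atTop_of_one_lt one_lt_two))).inv₀ (by norm_num)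
  rw [sub_zero, inv_eq_one_div] at hinv
  refine hinv.congr fun M => ?_
  rw [dyadicRatio, log_two_pow_succ_sub_one, Nat.cast_sub Nat.one_le_two_pow]
  push_cast
  field_simp
  ring

end DyadicRatio

section Growth

variable {θ C : ℝ} {g : ℕ → ℝ}

lemma pow_two_pow_log_rpow_one_div (hθ : 0 ≤ θ) (n : ℕ) :
    (θ ^ 2 ^ Nat.log 2 n) ^ ((1 : ℝ) / n) = θ ^ dyadicRatio n := by
  rw [← rpow_natCast, ← rpow_mul hθ, dyadicRatio]
  push_cast
  ring_nf

lemma tendsto_const_mul_rpow_one_div (hC : 0 < C) :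
    Tendsto (fun n : ℕ => (C * n) ^ ((1 : ℝ) / n)) atTop (𝓝 1) := by
  refine ((tendsto_rpow_div_mul_add C 1 0 one_ne_zero.symm).comp
    (tendsto_natCast_atTop_atTop.const_mul_atTop hC)).congr fun n => ?_
  rcases Nat.eq_zero_or_pos n with rfl | hn
  · simp
  simp only [Function.comp_apply, one_mul, add_zero]
  rw [div_mul_cancel_left₀ hC.ne', one_div]

lemma rpow_dyadicRatio_le_rpow_one_div (hθ : 0 ≤ θ)
    (hlow : ∀ n, 1 ≤ n → θ ^ 2 ^ Nat.log 2 n ≤ g n) {n : ℕ} (hn : 1 ≤ n) :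
    θ ^ dyadicRatio n ≤ g n ^ ((1 : ℝ) / n) := by
  rw [← pow_two_pow_log_rpow_one_div hθ]
  exact rpow_le_rpow (by positivity) (hlow n hn) (by positivity)

lemma rpow_one_div_le_mul_rpow_dyadicRatio (hθ : 0 ≤ θ) (hC : 0 ≤ C)
    (hlow : ∀ n, 1 ≤ n → θ ^ 2 ^ Nat.log 2 n ≤ g n)
    (hup : ∀ n, 1 ≤ n → g n ≤ C * n * θ ^ 2 ^ Nat.log 2 n) {n : ℕ} (hn : 1 ≤ n) :
    g n ^ ((1 : ℝ) / n) ≤ (C * n) ^ ((1 : ℝ) / n) * θ ^ dyadicRatio n := by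
  rw [← pow_two_pow_log_rpow_one_div hθ, ← mul_rpow (by positivity) (by positivity)]
  exact rpow_le_rpow ((pow_nonneg hθ _).trans (hlow n hn)) (hup n hn) (by positivity)

lemma eventually_rpow_one_div_le_mul (hθ : 1 ≤ θ) (hC : 0 < C)
    (hlow : ∀ n, 1 ≤ n → θ ^ 2 ^ Nat.log 2 n ≤ g n)
    (hup : ∀ n, 1 ≤ n → g n ≤ C * n * θ ^ 2 ^ Nat.log 2 n) :
    ∀ᶠ n : ℕ in atTop, g n ^ ((1 : ℝ) / n) ≤ (C * n) ^ ((1 : ℝ) / n) * θ := by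
  filter_upwards [eventually_ge_atTop 1] with n hn
  refine (rpow_one_div_le_mul_rpow_dyadicRatio (by linarith) hC.le hlow hup hn).trans ?_
  gcongr
  exact rpow_le_self_of_one_le hθ (dyadicRatio_le_one n)

lemma eventually_sqrt_le_rpow_one_div (hθ : 1 ≤ θ)
    (hlow : ∀ n, 1 ≤ n → θ ^ 2 ^ Nat.log 2 n ≤ g n) :
    ∀ᶠ n : ℕ in atTop, √θ ≤ g n ^ ((1 : ℝ) / n) := by
  filter_upwards [eventually_ge_atTop 1] with n hn
  rw [sqrt_eq_rpow]
  exact (rpow_le_rpow_of_exponent_le hθ (one_half_le_dyadicRatio hn)).trans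
    (rpow_dyadicRatio_le_rpow_one_div (by linarith) hlow hn)

lemma isBoundedUnder_le_rpow_one_div (hθ : 1 ≤ θ) (hC : 0 < C)
    (hlow : ∀ n, 1 ≤ n → θ ^ 2 ^ Nat.log 2 n ≤ g n)
    (hup : ∀ n, 1 ≤ n → g n ≤ C * n * θ ^ 2 ^ Nat.log 2 n) :
    IsBoundedUnder (· ≤ ·) atTop fun n : ℕ => g n ^ ((1 : ℝ) / n) :=
  ((tendsto_const_mul_rpow_one_div hC).mul_const θ).isBoundedUnder_le.mono_le
    (eventually_rpow_one_div_le_mul hθ hC hlow hup)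

lemma limsup_rpow_one_div_eq (hθ : 1 ≤ θ) (hC : 0 < C)
    (hlow : ∀ n, 1 ≤ n → θ ^ 2 ^ Nat.log 2 n ≤ g n)
    (hup : ∀ n, 1 ≤ n → g n ≤ C * n * θ ^ 2 ^ Nat.log 2 n) :
    limsup (fun n : ℕ => g n ^ ((1 : ℝ) / n)) atTop = θ := by
  have hlim : Tendsto (fun n : ℕ => (C * n) ^ ((1 : ℝ) / n) * θ) atTop (𝓝 θ) := by
    simpa using (tendsto_const_mul_rpow_one_div hC).mul_const θ
  refine le_antisymm ?_ ?_
  · calc limsup (fun n : ℕ => g n ^ ((1 : ℝ) / n)) atTop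
        ≤ limsup (fun n : ℕ => (C * n) ^ ((1 : ℝ) / n) * θ) atTop :=
          limsup_le_limsup (eventually_rpow_one_div_le_mul hθ hC hlow hup)
            (isCoboundedUnder_le_of_eventually_le _ (eventually_sqrt_le_rpow_one_div hθ hlow))
            hlim.isBoundedUnder_le
      _ = θ := hlim.limsup_eq
  · refine le_limsup_of_frequently_le ?_ (isBoundedUnder_le_rpow_one_div hθ hC hlow hup)
    refine (tendsto_pow_atTop_atTop_of_one_lt one_lt_two).frequently
      (Frequently.of_forall fun N => ?_)
    have := rpow_dyadicRatio_le_rpow_one_div (by linarith) hlow (Nat.one_le_two_pow (n := N))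
    rwa [dyadicRatio_two_pow, rpow_one] at this

lemma liminf_rpow_one_div_eq (hθ : 1 ≤ θ) (hC : 0 < C)
    (hlow : ∀ n, 1 ≤ n → θ ^ 2 ^ Nat.log 2 n ≤ g n)
    (hup : ∀ n, 1 ≤ n → g n ≤ C * n * θ ^ 2 ^ Nat.log 2 n) :
    liminf (fun n : ℕ => g n ^ ((1 : ℝ) / n)) atTop = √θ := by
  have hbelow := eventually_sqrt_le_rpow_one_div hθ hlow
  refine le_antisymm ?_
    (le_liminf_of_le (isBoundedUnder_le_rpow_one_div hθ hC hlow hup).isCoboundedUnder_ge hbelow)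
  set φ : ℕ → ℕ := fun M => 2 ^ (M + 1) - 1
  have hφ : Tendsto φ atTop atTop := (tendsto_sub_atTop_nat 1).comp
    ((tendsto_pow_atTop_atTop_of_one_lt one_lt_two).comp (tendsto_add_atTop_nat 1))
  have hbound : Tendsto (fun M => (C * φ M) ^ ((1 : ℝ) / φ M) * θ ^ dyadicRatio (φ M))
      atTop (𝓝 √θ) := by
    simpa [sqrt_eq_rpow] using ((tendsto_const_mul_rpow_one_div hC).comp hφ).mul
      (tendsto_const_nhds.rpow tendsto_dyadicRatio_two_pow_succ_sub_one
        (Or.inl (by positivity)))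
  refine le_of_forall_gt_imp_ge_of_dense fun c hc =>
    liminf_le_of_frequently_le ?_ (isBoundedUnder_of_eventually_ge hbelow)
  refine hφ.frequently ((hbound.eventually (gt_mem_nhds hc)).frequently.mono fun M hM => ?_)
  have hφ_pos : 1 ≤ φ M := Nat.le_sub_of_add_le (Nat.one_lt_two_pow (Nat.succ_ne_zero M))
  exact (rpow_one_div_le_mul_rpow_dyadicRatio (by linarith) hC.le hlow hup hφ_pos).trans hM.le

end Growth

end WildFlies

open WildFlies

/-- **Growth of the groupoid of wild flies**: with `a 0 = k ≥ 3`,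
`a (n+1) = a n * (a n - 1)`, `θ_k` the limit of `a(n)^(1/2^n)`, and
`γ(n) = 1 + Σ_{m=0}^{⌊log₂ n⌋} a m`, one has
`liminf γ(n)^(1/n) = √θ_k` and `limsup γ(n)^(1/n) = θ_k`. -/
theorem wild_groupoid_growth (k : ℕ) (hk : 3 ≤ k) (a : ℕ → ℕ)
    (ha0 : a 0 = k) (ha : ∀ n, a (n + 1) = a n * (a n - 1)) (θ : ℝ)
    (hθ : Filter.Tendsto (fun n : ℕ => (a n : ℝ) ^ ((1 : ℝ) / 2 ^ n))
      Filter.atTop (nhds θ))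
    (γ : ℕ → ℕ)
    (hγ : ∀ n : ℕ, 1 ≤ n → γ n = 1 + ∑ m ∈ Finset.range (Nat.log 2 n + 1), a m) :
    Filter.liminf (fun n : ℕ => (γ n : ℝ) ^ ((1 : ℝ) / n)) Filter.atTop
        = Real.sqrt θ ∧
    Filter.limsup (fun n : ℕ => (γ n : ℝ) ^ ((1 : ℝ) / n)) Filter.atTop = θ := by
  have h0 : 2 ≤ a 0 := by omega
  have hθ1 := one_le_of_succ_eq_mul_pred h0 ha hθ
  have hγ' (n : ℕ) (hn : 1 ≤ n) :
      (γ n : ℝ) = 1 + ∑ m ∈ Finset.range (Nat.log 2 n + 1), (a m : ℝ) := by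
    simp [hγ n hn]
  have hlow (n : ℕ) (hn : 1 ≤ n) : θ ^ 2 ^ Nat.log 2 n ≤ γ n := by
    refine (pow_two_pow_le_of_succ_eq_mul_pred h0 ha hθ _).trans ?_
    rw [hγ' n hn]
    have := Finset.single_le_sum (fun m _ => Nat.cast_nonneg (α := ℝ) (a m))
      (Finset.self_mem_range_succ (Nat.log 2 n))
    linarith
  have hup (n : ℕ) (hn : 1 ≤ n) : (γ n : ℝ) ≤ 3 * n * θ ^ 2 ^ Nat.log 2 n := by
    rw [hγ' n hn]
    refine (one_add_sum_le_of_le_two_mul_pow hθ1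
      (le_two_mul_pow_two_pow_of_succ_eq_mul_pred h0 ha hθ) _).trans ?_
    have : (Nat.log 2 n : ℝ) + 1 ≤ n := by exact_mod_cast Nat.log_lt_self 2 (by omega)
    gcongr
  exact ⟨liminf_rpow_one_div_eq hθ1 three_pos hlow hup,
    limsup_rpow_one_div_eq hθ1 three_pos hlow hup⟩
end

section
/- Call a sequence (a_n) of natural numbers subexponential if for every real r > 1 there exists N such that a_n ≤ r^n for all n ≥ N. For every subexponential sequence (a_n) there exists a sequence c : ℕ → ℕ with c(0) = 3 and 3 ≤ c(n+1) ≤ c(n)·(c(n) − 1) for all n, such that the function γ(n) = 1 + Σ_{m=0}^{⌊log₂ n⌋} c(m) (n ≥ 1) satisfies: (i) liminf_{n→∞} γ(n)/log₂ n = 3; (ii) there exists a strictly increasing sequence of integers (n_j) with γ(n_j) ≥ a_{n_j} for all j; and (iii) γ has subexponential growth, i.e. limsup_{n→∞} γ(n)^{1/n} = 1. -/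
/-!
Outside of rare bursts every generation keeps exactly three flies; during a burst the sizes
grow as fast as allowed, which roughly squares them each generation (`maxGen t > 2 ^ 2 ^ t`).
A burst starting at generation `s` reaches size `2 ^ 2 ^ L` after `L` generations, while a
subexponential `a` satisfies `a (2 ^ (s + L)) ≤ (2 ^ (1 / 2 ^ s)) ^ 2 ^ (s + L) = 2 ^ 2 ^ L` for
large `L`: this gives (ii). Each burst is preceded by a gap of size-`3` generations so long that
the average size up to the end of the gap is at most `3 + 1 / (j + 1)`, which gives (i). Since the
bursts start ever later, generation `m` has size at most `3 ^ 2 ^ (m - s)` for every fixed `s`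
once `m` is large, so `γ` is subexponential, which gives (iii).
-/

open Filter Finset Topology

def IsSubexponential (a : ℕ → ℕ) : Prop :=
  ∀ r : ℝ, 1 < r → ∃ N : ℕ, ∀ n : ℕ, N ≤ n → (a n : ℝ) ≤ r ^ n

def growth (c : ℕ → ℕ) (n : ℕ) : ℕ :=
  1 + ∑ m ∈ range (Nat.log 2 n + 1), c m

theorem liminf_eq_of_eventually_ge_of_frequently_le {ι : Type*} {l : Filter ι} {f : ι → ℝ}
    {b : ℝ} (hge : ∀ᶠ i in l, b ≤ f i) (hle : ∀ ε > 0, ∃ᶠ i in l, f i ≤ b + ε) :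
    liminf f l = b :=
  le_antisymm
    (le_of_forall_pos_le_add fun ε hε => liminf_le_of_frequently_le (hle ε hε) ⟨b, hge⟩)
    (le_liminf_of_le (IsCoboundedUnder.of_frequently_le (hle 1 one_pos)) hge)

theorem eventually_add_one_le_pow {ρ : ℝ} (hρ : 1 < ρ) :
    ∀ᶠ n : ℕ in atTop, (n : ℝ) + 1 ≤ ρ ^ n := by
  filter_upwards [(isLittleO_coe_const_pow_of_one_lt (R := ℝ) hρ).def one_half_pos,
    eventually_ge_atTop 1] with n hn h1
  rw [Real.norm_natCast, Real.norm_of_nonneg (by positivity)] at hn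
  have : (1 : ℝ) ≤ n := by exact_mod_cast h1
  linarith

theorem tendsto_rpow_one_div_of_isSubexponential {f : ℕ → ℕ} (hf : IsSubexponential f)
    (h1 : ∀ n, 1 ≤ f n) : Tendsto (fun n : ℕ => (f n : ℝ) ^ ((1 : ℝ) / n)) atTop (𝓝 1) := by
  refine tendsto_order.2 ⟨fun b hb => .of_forall fun n =>
    hb.trans_le (Real.one_le_rpow (by exact_mod_cast h1 n) (by positivity)), fun b hb => ?_⟩
  obtain ⟨r, hr, hrb⟩ := exists_between hb
  obtain ⟨N, hN⟩ := hf r hr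
  filter_upwards [eventually_ge_atTop (max N 1)] with n hn
  calc (f n : ℝ) ^ ((1 : ℝ) / n) ≤ (r ^ n) ^ ((n : ℝ)⁻¹) := by
        rw [one_div]; gcongr; exact hN n (le_of_max_le_left hn)
    _ = r := Real.pow_rpow_inv_natCast (by linarith) (by omega)
    _ < b := hrb

/-- The largest generation sizes allowed: every ordered pair of distinct flies has a child. -/
def maxGen : ℕ → ℕ
  | 0 => 3
  | t + 1 => maxGen t * (maxGen t - 1)

theorem three_le_maxGen (t : ℕ) : 3 ≤ maxGen t := by
  induction t with
  | zero => rfl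
  | succ t ih => exact ih.trans (Nat.le_mul_of_pos_right _ (by omega))

theorem maxGen_mono : Monotone maxGen :=
  monotone_nat_of_le_succ fun t => Nat.le_mul_of_pos_right _ (by have := three_le_maxGen t; omega)

theorem maxGen_le_three_pow (t : ℕ) : maxGen t ≤ 3 ^ 2 ^ t := by
  induction t with
  | zero => rfl
  | succ t ih =>
    calc maxGen t * (maxGen t - 1) ≤ 3 ^ 2 ^ t * 3 ^ 2 ^ t := Nat.mul_le_mul ih (by omega)
      _ = 3 ^ 2 ^ (t + 1) := by rw [← pow_add, pow_succ, mul_two]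

theorem two_pow_two_pow_lt_maxGen (t : ℕ) : 2 ^ 2 ^ t < maxGen t := by
  induction t with
  | zero => decide
  | succ t ih =>
    calc 2 ^ 2 ^ (t + 1) = 2 ^ 2 ^ t * 2 ^ 2 ^ t := by rw [← pow_add, pow_succ, mul_two]
      _ < maxGen t * (maxGen t - 1) :=
        Nat.mul_lt_mul_of_lt_of_le ih (by omega) (by have := three_le_maxGen t; omega)

theorem IsSubexponential.exists_le_maxGen {a : ℕ → ℕ} (ha : IsSubexponential a) (s : ℕ) :
    ∃ L, a (2 ^ (s + L)) ≤ maxGen L := by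
  set r : ℝ := 2 ^ ((2 ^ s : ℕ) : ℝ)⁻¹
  obtain ⟨N, hN⟩ := ha r (Real.one_lt_rpow (by norm_num) (by positivity))
  have hr : r ^ 2 ^ (s + N) = 2 ^ 2 ^ N := by
    rw [pow_add, pow_mul, Real.rpow_inv_natCast_pow (by norm_num) (by positivity)]
  have hle := hN (2 ^ (s + N))
    (N.lt_two_pow_self.le.trans (Nat.pow_le_pow_right two_pos (by omega)))
  rw [hr] at hle
  have : (a (2 ^ (s + N)) : ℝ) ≤ maxGen N :=
    hle.trans (by exact_mod_cast (two_pow_two_pow_lt_maxGen N).le)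
  exact ⟨N, by exact_mod_cast this⟩

section runLength

variable (A : Set ℕ)

/-- The number of consecutive elements of `A` ending at `m`; `0` is never counted. -/
noncomputable def runLength : ℕ → ℕ
  | 0 => 0
  | m + 1 => open Classical in if m + 1 ∈ A then runLength m + 1 else 0

variable {A}

theorem runLength_eq_zero_of_notMem {m : ℕ} (hm : m ∉ A) : runLength A m = 0 := by
  cases m with
  | zero => rfl
  | succ m => simp [runLength, hm]

theorem runLength_add_le {s m : ℕ} (hs : runLength A s = 0) (hsm : s ≤ m) :
    runLength A m + s ≤ m := by
  induction m, hsm using Nat.le_induction with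
  | base => omega
  | succ m _ ih =>
    rw [runLength]
    split_ifs <;> omega

theorem runLength_le (m : ℕ) : runLength A m ≤ m := by
  simpa using runLength_add_le (A := A) rfl m.zero_le

theorem runLength_eq_sub {s m : ℕ} (hs : runLength A s = 0) (hsm : s ≤ m)
    (hA : ∀ i, s < i → i ≤ m → i ∈ A) : runLength A m = m - s := by
  induction m, hsm using Nat.le_induction with
  | base => simpa using hs
  | succ m hsm ih =>
    rw [runLength, if_pos (hA _ (by omega) le_rfl), ih fun i hi him => hA i hi (by omega)]
    omega

theorem eventually_runLength_add_le (hA : ∃ᶠ s in atTop, s ∉ A) (t : ℕ) :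
    ∀ᶠ k in atTop, ∀ m ≤ k, runLength A m + t ≤ k := by
  obtain ⟨s, hts, hs⟩ := frequently_atTop.1 hA t
  filter_upwards [eventually_ge_atTop (s + t)] with k hk m hmk
  by_cases hsm : s ≤ m
  · have := runLength_add_le (runLength_eq_zero_of_notMem hs) hsm
    omega
  · have := runLength_le (A := A) m
    omega

theorem maxGen_runLength_succ_le (m : ℕ) :
    maxGen (runLength A (m + 1)) ≤
      maxGen (runLength A m) * (maxGen (runLength A m) - 1) := by
  rw [runLength]
  split_ifs
  · rfl
  · exact three_le_maxGen (runLength A m + 1)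

theorem eventually_maxGen_runLength_le (hA : ∃ᶠ s in atTop, s ∉ A) {ρ : ℝ} (hρ : 1 < ρ) :
    ∀ᶠ k in atTop, ∀ m ≤ k, (maxGen (runLength A m) : ℝ) ≤ ρ ^ 2 ^ k := by
  obtain ⟨t, ht⟩ := pow_unbounded_of_one_lt (3 : ℝ) hρ
  have h3 : (3 : ℝ) ≤ ρ ^ 2 ^ t := ht.le.trans (pow_le_pow_right₀ hρ.le t.lt_two_pow_self.le)
  filter_upwards [eventually_runLength_add_le hA t] with k hk m hmk
  calc (maxGen (runLength A m) : ℝ) ≤ (3 : ℝ) ^ 2 ^ runLength A m := by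
        exact_mod_cast maxGen_le_three_pow _
    _ ≤ (ρ ^ 2 ^ t) ^ 2 ^ runLength A m := by gcongr
    _ = ρ ^ 2 ^ (t + runLength A m) := by rw [← pow_mul, ← pow_add]
    _ ≤ ρ ^ 2 ^ k :=
      pow_le_pow_right₀ hρ.le (Nat.pow_le_pow_right two_pos (by linarith [hk m hmk]))

end runLength

section growth

theorem one_le_growth (c : ℕ → ℕ) (n : ℕ) : 1 ≤ growth c n :=
  Nat.le_add_right 1 _

theorem growth_two_pow (c : ℕ → ℕ) (K : ℕ) :
    growth c (2 ^ K) = 1 + ∑ m ∈ range (K + 1), c m := by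
  rw [growth, Nat.log_pow one_lt_two]

theorem le_growth_two_pow (c : ℕ → ℕ) (K : ℕ) : c K ≤ growth c (2 ^ K) := by
  rw [growth_two_pow]
  exact (single_le_sum (fun _ _ => Nat.zero_le _) (self_mem_range_succ K)).trans
    (Nat.le_add_left _ _)

variable {c : ℕ → ℕ}

theorem three_le_growth_div_logb (hc : ∀ m, 3 ≤ c m) {n : ℕ} (hn : 2 ≤ n) :
    3 ≤ (growth c n : ℝ) / Real.logb 2 n := by
  set k := Nat.log 2 n
  have hlog : Real.logb 2 n < k + 1 := by
    rw [Real.logb_lt_iff_lt_rpow one_lt_two (by positivity)]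
    exact_mod_cast Nat.lt_pow_succ_log_self one_lt_two n
  have hsum : 3 * (k + 1) ≤ growth c n := by
    calc 3 * (k + 1) ≤ ∑ m ∈ range (k + 1), c m := by
          simpa [mul_comm] using card_nsmul_le_sum (range (k + 1)) c 3 fun m _ => hc m
      _ ≤ growth c n := Nat.le_add_left _ _
  have hsum' : (3 * (k + 1) : ℝ) ≤ growth c n := by exact_mod_cast hsum
  rw [le_div_iff₀ (Real.logb_pos one_lt_two (by exact_mod_cast hn))]
  linarith

theorem sum_range_le_of_eq_three_of_lt {k K C : ℕ} (hkK : k ≤ K) (hC : ∀ m ≤ k, c m ≤ C)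
    (hgap : ∀ m, k < m → m ≤ K → c m = 3) :
    ∑ m ∈ range (K + 1), c m ≤ (k + 1) * C + 3 * K := by
  rw [← sum_range_add_sum_Ico _ (by omega : k + 1 ≤ K + 1)]
  have hhead : ∑ m ∈ range (k + 1), c m ≤ (k + 1) * C := by
    simpa using sum_le_card_nsmul (range (k + 1)) c C fun m hm =>
      hC m (Nat.lt_succ_iff.1 (mem_range.1 hm))
  have hgap' : ∑ m ∈ Ico (k + 1) (K + 1), c m = 3 * (K - k) := by
    rw [sum_congr rfl fun m hm => hgap m (mem_Ico.1 hm).1 (Nat.lt_succ_iff.1 (mem_Ico.1 hm).2),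
      sum_const, Nat.card_Ico, smul_eq_mul]
    omega
  omega

theorem isSubexponential_growth
    (hc : ∀ ρ : ℝ, 1 < ρ → ∀ᶠ k in atTop, ∀ m ≤ k, (c m : ℝ) ≤ ρ ^ 2 ^ k) :
    IsSubexponential (growth c) := by
  intro r hr
  have hρ : 1 < √r := Real.lt_sqrt_of_sq_lt (by linarith)
  obtain ⟨K, hK⟩ := eventually_atTop.1 (hc √r hρ)
  obtain ⟨N, hN⟩ := eventually_atTop.1 (eventually_add_one_le_pow hρ)
  refine ⟨max (2 ^ K) N, fun n hn => ?_⟩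
  set k := Nat.log 2 n
  have hkn : 2 ^ k ≤ n := Nat.pow_log_le_self 2 (by have := Nat.one_le_two_pow (n := K); omega)
  have hsum : ∑ m ∈ range (k + 1), (c m : ℝ) ≤ (k + 1) * √r ^ 2 ^ k := by
    simpa using sum_le_card_nsmul (range (k + 1)) (fun m => (c m : ℝ)) _ fun m hm =>
      hK k (Nat.le_log_of_pow_le one_lt_two (le_of_max_le_left hn)) m
        (Nat.lt_succ_iff.1 (mem_range.1 hm))
  have hk : (k : ℝ) + 2 ≤ n + 1 := by
    exact_mod_cast (show k + 2 ≤ n + 1 by have := k.lt_two_pow_self; omega)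
  calc (growth c n : ℝ) = 1 + ∑ m ∈ range (k + 1), (c m : ℝ) := by simp [growth, k]
    _ ≤ (k + 2) * √r ^ 2 ^ k := by nlinarith [one_le_pow₀ hρ.le (n := 2 ^ k)]
    _ ≤ (n + 1) * √r ^ n := by gcongr; exact hρ.le
    _ ≤ √r ^ n * √r ^ n := by gcongr; exact hN n (le_of_max_le_right hn)
    _ = r ^ n := by rw [← mul_pow, Real.mul_self_sqrt (by linarith)]

end growth

namespace FlyBursts

variable (L : ℕ → ℕ)

/-- Burst `j + 1` starts at `j + 1` times a bound for one plus the total size of the generations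
up to the end of burst `j`, so that the average size up to its start is at most `3 + 1 / (j + 1)`.
-/
def burstStart : ℕ → ℕ
  | 0 => 0
  | j + 1 =>
    let k := burstStart j + L (burstStart j)
    (j + 1) * ((k + 1) * maxGen k + 1)

def burstEnd (j : ℕ) : ℕ := burstStart L j + L (burstStart L j)

def bursts : Set ℕ := {m | ∃ j, burstStart L j < m ∧ m ≤ burstEnd L j}

noncomputable def genSize (m : ℕ) : ℕ := maxGen (runLength (bursts L) m)

theorem burstStart_succ (j : ℕ) :
    burstStart L (j + 1) = (j + 1) * ((burstEnd L j + 1) * maxGen (burstEnd L j) + 1) := rfl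

theorem burstStart_le_burstEnd (j : ℕ) : burstStart L j ≤ burstEnd L j :=
  Nat.le_add_right _ _

theorem burstEnd_lt_burstStart_succ (j : ℕ) : burstEnd L j < burstStart L (j + 1) := by
  have h : burstEnd L j + 1 ≤ (burstEnd L j + 1) * maxGen (burstEnd L j) :=
    Nat.le_mul_of_pos_right _ (by have := three_le_maxGen (burstEnd L j); omega)
  rw [burstStart_succ]
  exact (show burstEnd L j < _ by omega).trans_le (Nat.le_mul_of_pos_left _ j.succ_pos)

theorem burstStart_strictMono : StrictMono (burstStart L) :=
  strictMono_nat_of_lt_succ fun j =>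
    (burstStart_le_burstEnd L j).trans_lt (burstEnd_lt_burstStart_succ L j)

theorem burstEnd_strictMono : StrictMono (burstEnd L) :=
  strictMono_nat_of_lt_succ fun j =>
    (burstEnd_lt_burstStart_succ L j).trans_le (burstStart_le_burstEnd L (j + 1))

theorem notMem_bursts {j m : ℕ} (h₁ : burstEnd L j < m) (h₂ : m ≤ burstStart L (j + 1)) :
    m ∉ bursts L := by
  rintro ⟨i, hi₁, hi₂⟩
  rcases le_or_gt i j with hij | hij
  · have := (burstEnd_strictMono L).monotone hij
    omega
  · have := (burstStart_strictMono L).monotone (show j + 1 ≤ i by omega)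
    omega

theorem burstStart_notMem_bursts (j : ℕ) : burstStart L j ∉ bursts L := by
  cases j with
  | zero => rintro ⟨i, hi, -⟩; exact Nat.not_lt_zero _ hi
  | succ j => exact notMem_bursts L (burstEnd_lt_burstStart_succ L j) le_rfl

theorem three_le_genSize (m : ℕ) : 3 ≤ genSize L m := three_le_maxGen _

theorem genSize_burstEnd (j : ℕ) : genSize L (burstEnd L j) = maxGen (L (burstStart L j)) := by
  rw [genSize, runLength_eq_sub (runLength_eq_zero_of_notMem (burstStart_notMem_bursts L j))
      (burstStart_le_burstEnd L j) fun i hi₁ hi₂ => ⟨j, hi₁, hi₂⟩,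
    burstEnd, Nat.add_sub_cancel_left]

theorem growth_div_logb_le (j : ℕ) :
    (growth (genSize L) (2 ^ burstStart L (j + 1)) : ℝ) /
        Real.logb 2 ((2 ^ burstStart L (j + 1) : ℕ) : ℝ) ≤ 3 + 1 / ((j : ℝ) + 1) := by
  obtain ⟨B, hB⟩ : ∃ B, B = (burstEnd L j + 1) * maxGen (burstEnd L j) + 1 := ⟨_, rfl⟩
  have hK : burstStart L (j + 1) = (j + 1) * B := by rw [hB]; rfl
  have hsum : growth (genSize L) (2 ^ ((j + 1) * B)) ≤ B + 3 * ((j + 1) * B) := by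
    rw [growth_two_pow, ← hK]
    have := sum_range_le_of_eq_three_of_lt (c := genSize L) (burstEnd_lt_burstStart_succ L j).le
      (fun m hm => maxGen_mono ((runLength_le m).trans hm))
      fun m h₁ h₂ => by rw [genSize, runLength_eq_zero_of_notMem (notMem_bursts L h₁ h₂)]; rfl
    omega
  have hsum' : (growth (genSize L) (2 ^ ((j + 1) * B)) : ℝ) ≤ B + 3 * ((j + 1) * B) := by
    exact_mod_cast hsum
  rw [hK, Nat.cast_pow, Nat.cast_ofNat, Real.logb_pow, Real.logb_self_eq_one one_lt_two, mul_one,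
    div_le_iff₀ (by exact_mod_cast Nat.mul_pos j.succ_pos (by omega))]
  calc _ ≤ (B : ℝ) + 3 * ((j + 1) * B) := hsum'
    _ = (3 + 1 / ((j : ℝ) + 1)) * ((j + 1) * B : ℕ) := by push_cast; field_simp; ring

theorem liminf_growth_div_logb :
    liminf (fun n : ℕ => (growth (genSize L) n : ℝ) / Real.logb 2 n) atTop = 3 := by
  refine liminf_eq_of_eventually_ge_of_frequently_le
    ((eventually_ge_atTop 2).mono fun n => three_le_growth_div_logb (three_le_genSize L))
    fun ε hε => ?_
  have hstarts : Tendsto (fun j => 2 ^ burstStart L (j + 1)) atTop atTop :=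
    ((pow_right_strictMono₀ one_lt_two).comp
      ((burstStart_strictMono L).comp fun _ _ => Nat.succ_lt_succ)).tendsto_atTop
  refine hstarts.frequently (Eventually.frequently ?_)
  filter_upwards [tendsto_one_div_add_atTop_nhds_zero_nat.eventually (gt_mem_nhds hε)] with j hj
  exact (growth_div_logb_le L j).trans (by linarith)

theorem isSubexponential_growth_genSize : IsSubexponential (growth (genSize L)) :=
  isSubexponential_growth fun _ hρ => eventually_maxGen_runLength_le
    ((burstStart_strictMono L).tendsto_atTop.frequently
      (.of_forall (burstStart_notMem_bursts L))) hρ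

end FlyBursts

open FlyBursts

/-- **Hybrid species of flies with oscillating groupoid growth**: for every
subexponential sequence `a`, there are generation sizes `c` with `c 0 = 3` and
`3 ≤ c (n+1) ≤ c n * (c n - 1)` such that the groupoid growth function
`γ(n) = 1 + Σ_{m=0}^{⌊log₂ n⌋} c m` satisfies: (i) `liminf γ(n)/log₂ n = 3`;
(ii) `γ(n_j) ≥ a(n_j)` along a strictly increasing sequence `(n_j)`; and
(iii) `γ` has subexponential growth, i.e. `limsup γ(n)^(1/n) = 1`. -/
theorem hybrid_flies_oscillating_growth (a : ℕ → ℕ)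
    (ha : ∀ r : ℝ, 1 < r → ∃ N : ℕ, ∀ n : ℕ, N ≤ n → (a n : ℝ) ≤ r ^ n) :
    ∃ c : ℕ → ℕ, c 0 = 3 ∧
      (∀ n : ℕ, 3 ≤ c (n + 1) ∧ c (n + 1) ≤ c n * (c n - 1)) ∧
      Filter.liminf
        (fun n : ℕ =>
          ((1 + ∑ m ∈ Finset.range (Nat.log 2 n + 1), c m : ℕ) : ℝ) / Real.logb 2 n)
        Filter.atTop = 3 ∧
      (∃ nj : ℕ → ℕ, StrictMono nj ∧ ∀ j : ℕ,
        a (nj j) ≤ 1 + ∑ m ∈ Finset.range (Nat.log 2 (nj j) + 1), c m) ∧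
      Filter.limsup
        (fun n : ℕ =>
          ((1 + ∑ m ∈ Finset.range (Nat.log 2 n + 1), c m : ℕ) : ℝ) ^ ((1 : ℝ) / n))
        Filter.atTop = 1 := by
  choose L hL using IsSubexponential.exists_le_maxGen ha
  refine ⟨genSize L, rfl, fun n => ⟨three_le_genSize L _, maxGen_runLength_succ_le n⟩,
    liminf_growth_div_logb L, ⟨fun j => 2 ^ burstEnd L j, ?_, fun j => ?_⟩,
    (tendsto_rpow_one_div_of_isSubexponential (isSubexponential_growth_genSize L)
      (one_le_growth _)).limsup_eq⟩
  · exact (pow_right_strictMono₀ one_lt_two).comp (burstEnd_strictMono L)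
  · calc a (2 ^ burstEnd L j) ≤ maxGen (L (burstStart L j)) := hL _
      _ = genSize L (burstEnd L j) := (genSize_burstEnd L j).symm
      _ ≤ growth (genSize L) (2 ^ burstEnd L j) := le_growth_two_pow _ _
end

section
/- Let p be a prime and k ≥ 3 an integer, set μ = log_{2p−1} 2, define a : ℕ → ℕ by a(0) = k, a(n+1) = a(n)·(a(n) − 1), and let θ_k = lim_{n→∞} a(n)^{1/2^n}. Let c : ℕ → ℕ satisfy c(0) = k and c(n+1) ≤ c(n)·(c(n) − 1) for all n, and let w : ℕ → ℝ satisfy w(0) = 1 and w(n+1) = (p^{S_n} + p^{R_n} − 1)·w(n) for some positive integers S_n, R_n. Then for every θ* > θ_k there exists M such that c(n) < (θ*)^{w(n)^{μ}} for all n ≥ M. -/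
/-!
Since `x ↦ x (x - 1)` is monotone, `c n ≤ a n`, and `a n < (θ*) ^ 2 ^ n` for large `n` because
`a n ^ (1 / 2 ^ n) → θ_k < θ*`. Every factor `p ^ S + p ^ R - 1` is at least `2p - 1`, so
`w n ≥ (2p - 1) ^ n` and hence `w n ^ μ ≥ 2 ^ n`; finally `θ* > θ_k ≥ 1`.
-/

open Filter Topology

lemma monotone_mul_pred : Monotone fun x : ℕ => x * (x - 1) :=
  fun _ _ h => Nat.mul_le_mul h (Nat.sub_le_sub_right h 1)

lemma le_of_le_mul_pred {c a : ℕ → ℕ} (h0 : c 0 ≤ a 0) (hc : ∀ n, c (n + 1) ≤ c n * (c n - 1))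
    (ha : ∀ n, a (n + 1) = a n * (a n - 1)) (n : ℕ) : c n ≤ a n :=
  monotone_mul_pred.seq_le_seq n h0 (fun k _ => hc k) (fun k _ => (ha k).ge)

-- `2` is a fixed point of `x ↦ x (x - 1)`.
lemma two_le_of_eq_mul_pred {a : ℕ → ℕ} (h0 : 2 ≤ a 0) (ha : ∀ n, a (n + 1) = a n * (a n - 1))
    (n : ℕ) : 2 ≤ a n :=
  monotone_mul_pred.seq_le_seq (x := fun _ => 2) n h0 (fun _ _ => le_rfl) (fun k _ => (ha k).ge)

lemma pow_le_of_eq_mul {b : ℝ} {f w : ℕ → ℝ} (hb : 0 ≤ b) (hf : ∀ n, b ≤ f n) (hw0 : w 0 = 1)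
    (hw : ∀ n, w (n + 1) = f n * w n) (n : ℕ) : b ^ n ≤ w n := by
  induction n with
  | zero => simp [hw0]
  | succ n ih =>
    rw [hw n, pow_succ']
    exact mul_le_mul (hf n) ih (pow_nonneg hb n) (hb.trans (hf n))

lemma two_mul_sub_one_le_pow_add_pow_sub_one {x : ℝ} (hx : 1 ≤ x) {m l : ℕ} (hm : m ≠ 0)
    (hl : l ≠ 0) : 2 * x - 1 ≤ x ^ m + x ^ l - 1 := by
  linarith [le_self_pow₀ hx hm, le_self_pow₀ hx hl]

lemma pow_le_rpow_logb {b x y : ℝ} (hb : 1 < b) (hy : 1 ≤ y) {n : ℕ} (hx : b ^ n ≤ x) :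
    y ^ n ≤ x ^ Real.logb b y := by
  have hb0 : 0 ≤ b := by linarith
  calc y ^ n = (b ^ Real.logb b y) ^ n := by rw [Real.rpow_logb (by linarith) hb.ne' (by linarith)]
    _ = (b ^ n) ^ Real.logb b y := Real.rpow_pow_comm hb0 _ n
    _ ≤ x ^ Real.logb b y :=
        Real.rpow_le_rpow (pow_nonneg hb0 n) hx (Real.logb_nonneg hb hy)

lemma one_le_of_tendsto_rpow {x t : ℕ → ℝ} {θ : ℝ} (hx : ∀ n, 1 ≤ x n) (ht : ∀ n, 0 ≤ t n)
    (h : Tendsto (fun n => x n ^ t n) atTop (𝓝 θ)) : 1 ≤ θ :=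
  ge_of_tendsto' h fun n => Real.one_le_rpow (hx n) (ht n)

lemma eventually_lt_rpow_of_tendsto_rpow_one_div {x t : ℕ → ℝ} {θ θs : ℝ} (hx : ∀ n, 0 ≤ x n)
    (ht : ∀ n, 0 < t n) (h : Tendsto (fun n => x n ^ (1 / t n)) atTop (𝓝 θ)) (hθs : θ < θs)
    (hθs0 : 0 ≤ θs) : ∀ᶠ n in atTop, x n < θs ^ t n := by
  filter_upwards [h.eventually_lt_const hθs] with n hn
  rw [one_div] at hn
  exact (Real.rpow_inv_lt_iff_of_pos (hx n) hθs0 (ht n)).mp hn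

/-- **Generation sizes versus weights** (upper bound for an arbitrary specie with a
uniform tuple): let `p` be a prime, `k ≥ 3`, `a` the wild generation sizes with
limit `θ_k` of `a(n)^(1/2^n)`, `c` the generation sizes of an arbitrary specie
(`c 0 = k`, `c (n+1) ≤ c n * (c n - 1)`), and `w` the weights of the pivot elements
(`w 0 = 1`, `w (n+1) = (p^{S_n} + p^{R_n} - 1) w n` for positive integers `S_n, R_n`).
Then for every `θ* > θ_k` one has `c n < (θ*)^(w(n)^μ)` for all large `n`, where
`μ = log_{2p-1} 2`. -/
theorem species_size_vs_weight (p k : ℕ) (hp : p.Prime) (hk : 3 ≤ k)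
    (a : ℕ → ℕ) (ha0 : a 0 = k) (ha : ∀ n, a (n + 1) = a n * (a n - 1))
    (θ : ℝ)
    (hθ : Filter.Tendsto (fun n : ℕ => (a n : ℝ) ^ ((1 : ℝ) / 2 ^ n))
      Filter.atTop (nhds θ))
    (c : ℕ → ℕ) (hc0 : c 0 = k) (hc : ∀ n, c (n + 1) ≤ c n * (c n - 1))
    (S R : ℕ → ℕ) (hS : ∀ n, 0 < S n) (hR : ∀ n, 0 < R n)
    (w : ℕ → ℝ) (hw0 : w 0 = 1)
    (hw : ∀ n, w (n + 1) = ((p : ℝ) ^ S n + (p : ℝ) ^ R n - 1) * w n)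
    (θs : ℝ) (hθs : θ < θs) :
    ∃ M : ℕ, ∀ n : ℕ, M ≤ n →
      (c n : ℝ) < θs ^ (w n ^ Real.logb (2 * (p : ℝ) - 1) 2) := by
  have hp2 : (2 : ℝ) ≤ p := by exact_mod_cast hp.two_le
  have hp1 : (1 : ℝ) ≤ p := by linarith
  have hb : (1 : ℝ) < 2 * p - 1 := by linarith
  have ha2 : ∀ n, (2 : ℝ) ≤ a n := fun n => by
    exact_mod_cast two_le_of_eq_mul_pred (by omega) ha n
  have hθ1 : 1 ≤ θ :=
    one_le_of_tendsto_rpow (fun n => by linarith [ha2 n]) (fun n => by positivity) hθ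
  have hwb : ∀ n, (2 * (p : ℝ) - 1) ^ n ≤ w n :=
    pow_le_of_eq_mul (by linarith) (fun n => two_mul_sub_one_le_pow_add_pow_sub_one hp1
      (hS n).ne' (hR n).ne') hw0 hw
  obtain ⟨M, hM⟩ := eventually_atTop.mp <| eventually_lt_rpow_of_tendsto_rpow_one_div
    (fun n => Nat.cast_nonneg (a n)) (fun n => by positivity) hθ hθs (by linarith)
  refine ⟨M, fun n hn => ?_⟩
  calc (c n : ℝ) ≤ a n := by exact_mod_cast le_of_le_mul_pred (by omega) hc ha n
    _ < θs ^ ((2 : ℝ) ^ n) := hM n hn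
    _ ≤ θs ^ (w n ^ Real.logb (2 * (p : ℝ) - 1) 2) :=
        Real.rpow_le_rpow_of_exponent_le (by linarith) (pow_le_rpow_logb hb one_le_two (hwb n))
end

section
/- Let n ≥ 1 and let Γ be the set of permutations π of {1, 2, …, 2^n} such that for every l with 0 ≤ l ≤ n−1 and every k with 0 ≤ k ≤ 2^{n−1−l} − 1 one has π(1 + 2k·2^l) < π(1 + (2k+1)·2^l). Then the cardinality of Γ equals (2^n)! / 2^{2^n − 1}, the index of a Sylow 2-subgroup of the symmetric group Sym(2^n). -/
/-!
For a level `l < n`, let `w_b` (for `b` a bit vector indexed by the blocks of size `2^(l+1)`)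
be the involution `x ↦ x xor 2^l` on the blocks selected by `b`, i.e. it swaps their two halves.
Right multiplication by `w_b` maps level-`j` pairs to level-`j` pairs for `j < l`, so it preserves
the conditions of the lower levels, and each permutation becomes increasing on all level-`l`
pairs for exactly one `b` (the one recording which pairs it inverts). So imposing the
`2^(n-1-l)` conditions of level `l` divides the count by `2^(2^(n-1-l))`, and after all levels
`(2^n)!` is divided by `2^(1 + 2 + ⋯ + 2^(n-1)) = 2^(2^n - 1)`.
-/

open Equiv

section PairInversions

variable {α I : Type*} [LinearOrder α] {a c : I → α} {w : (I → Bool) → Perm α}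

def pairInversions (a c : I → α) (π : Perm α) : I → Bool := fun i => decide (π (c i) < π (a i))

theorem pairInversions_mul (hwa : ∀ b i, w b (a i) = if b i then c i else a i)
    (hwc : ∀ b i, w b (c i) = if b i then a i else c i) {π : Perm α}
    (hπ : ∀ i, π (a i) < π (c i)) (b : I → Bool) : pairInversions a c (π * w b) = b := by
  funext i
  cases hb : b i <;> simp [pairInversions, hwa, hwc, hb, hπ i, (hπ i).le]

theorem lt_mul_pairInversions (hac : ∀ i, a i ≠ c i)
    (hwa : ∀ b i, w b (a i) = if b i then c i else a i)
    (hwc : ∀ b i, w b (c i) = if b i then a i else c i) (π : Perm α) (i : I) :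
    (π * w (pairInversions a c π)) (a i) < (π * w (pairInversions a c π)) (c i) := by
  by_cases h : π (c i) < π (a i)
  · simp [pairInversions, hwa, hwc, h]
  · simpa [pairInversions, hwa, hwc, h] using
      lt_of_le_of_ne (not_lt.1 h) (π.injective.ne (hac i))

def orderedMulEquiv {S : Set (Perm α)} (hac : ∀ i, a i ≠ c i) (hw : ∀ b, w b * w b = 1)
    (hwa : ∀ b i, w b (a i) = if b i then c i else a i)
    (hwc : ∀ b i, w b (c i) = if b i then a i else c i) (hS : ∀ π ∈ S, ∀ b, π * w b ∈ S) :
    {π ∈ S | ∀ i, π (a i) < π (c i)} × (I → Bool) ≃ S where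
  toFun p := ⟨p.1 * w p.2, hS _ p.1.2.1 _⟩
  invFun π := (⟨π * w (pairInversions a c π), hS _ π.2 _, lt_mul_pairInversions hac hwa hwc π⟩,
    pairInversions a c π)
  left_inv := by
    rintro ⟨⟨π, -, hπ⟩, b⟩
    simp [pairInversions_mul hwa hwc hπ, mul_assoc, hw]
  right_inv := by
    rintro ⟨π, -⟩
    simp [mul_assoc, hw]

theorem card_eq_two_pow_mul_card_ordered [Finite I] {S : Set (Perm α)} (hac : ∀ i, a i ≠ c i)
    (hw : ∀ b, w b * w b = 1) (hwa : ∀ b i, w b (a i) = if b i then c i else a i)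
    (hwc : ∀ b i, w b (c i) = if b i then a i else c i) (hS : ∀ π ∈ S, ∀ b, π * w b ∈ S) :
    Nat.card S = 2 ^ Nat.card I * Nat.card {π ∈ S | ∀ i, π (a i) < π (c i)} := by
  rw [← Nat.card_congr (orderedMulEquiv hac hw hwa hwc hS), Nat.card_prod, Nat.card_fun,
    mul_comm]
  simp

end PairInversions

theorem Nat.mul_two_pow_succ_xor_two_pow (k l : ℕ) :
    k * 2 ^ (l + 1) ^^^ 2 ^ l = k * 2 ^ (l + 1) + 2 ^ l := by
  apply Nat.eq_of_testBit_eq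
  intro i
  rw [mul_comm, Nat.testBit_two_pow_mul_add _ (Nat.pow_lt_pow_right one_lt_two (by omega)),
    Nat.testBit_xor, Nat.testBit_two_pow_mul, Nat.testBit_two_pow]
  split_ifs
  · simp [show ¬ l + 1 ≤ i by omega]
  · simp [show l + 1 ≤ i by omega, show l ≠ i by omega]

namespace SylowTransversal

variable {n l j : ℕ}

theorem two_pow_mul_two_pow_succ (hl : l < n) : 2 ^ (n - 1 - l) * 2 ^ (l + 1) = 2 ^ n := by
  rw [← pow_add]; congr 1; omega

def partner (hl : l < n) (x : Fin (2 ^ n)) : Fin (2 ^ n) :=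
  ⟨x ^^^ 2 ^ l, Nat.xor_lt_two_pow x.2 (Nat.pow_lt_pow_right one_lt_two hl)⟩

def blockIdx (hl : l < n) (x : Fin (2 ^ n)) : Fin (2 ^ (n - 1 - l)) :=
  ⟨x / 2 ^ (l + 1), (Nat.div_lt_iff_lt_mul (by positivity)).2 <|
    (two_pow_mul_two_pow_succ hl).symm ▸ x.2⟩

def blockStart (hl : l < n) (k : Fin (2 ^ (n - 1 - l))) : Fin (2 ^ n) :=
  ⟨k * 2 ^ (l + 1), two_pow_mul_two_pow_succ hl ▸
    Nat.mul_lt_mul_of_pos_right k.2 (by positivity)⟩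

@[simp] theorem partner_partner (hl : l < n) (x : Fin (2 ^ n)) : partner hl (partner hl x) = x :=
  Fin.ext <| by simp [partner]

theorem partner_comm (hj : j < n) (hl : l < n) (x : Fin (2 ^ n)) :
    partner hj (partner hl x) = partner hl (partner hj x) :=
  Fin.ext <| by simp only [partner, Nat.xor_assoc, Nat.xor_comm (2 ^ l)]

theorem blockIdx_partner (hj : j < n) (hl : l < n) (hjl : j ≤ l) (x : Fin (2 ^ n)) :
    blockIdx hl (partner hj x) = blockIdx hl x := by
  refine Fin.ext ?_
  simp only [blockIdx, partner]
  rw [Nat.xor_div_two_pow, Nat.div_eq_of_lt (Nat.pow_lt_pow_right one_lt_two (by omega)),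
    Nat.xor_zero]

theorem partner_mod (hl : l < n) (hjl : j < l) (x : Fin (2 ^ n)) :
    (partner hl x : ℕ) % 2 ^ (j + 1) = x % 2 ^ (j + 1) := by
  rw [partner, Nat.xor_mod_two_pow, Nat.mod_eq_zero_of_dvd (pow_dvd_pow 2 hjl), Nat.xor_zero]

@[simp] theorem blockIdx_blockStart (hl : l < n) (k : Fin (2 ^ (n - 1 - l))) :
    blockIdx hl (blockStart hl k) = k :=
  Fin.ext <| Nat.mul_div_cancel _ (by positivity)

theorem blockStart_blockIdx (hl : l < n) {x : Fin (2 ^ n)} (hx : (x : ℕ) % 2 ^ (l + 1) = 0) :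
    blockStart hl (blockIdx hl x) = x :=
  Fin.ext <| Nat.div_mul_cancel (Nat.dvd_of_mod_eq_zero hx)

theorem blockStart_ne_partner (hl : l < n) (k : Fin (2 ^ (n - 1 - l))) :
    blockStart hl k ≠ partner hl (blockStart hl k) := by
  simp [blockStart, partner, Fin.ext_iff, Nat.mul_two_pow_succ_xor_two_pow]

def blockFlip (hl : l < n) (b : Fin (2 ^ (n - 1 - l)) → Bool) : Perm (Fin (2 ^ n)) :=
  Function.Involutive.toPerm (fun x => if b (blockIdx hl x) then partner hl x else x) <| by
    intro x
    by_cases hb : b (blockIdx hl x) <;> simp [hb, blockIdx_partner hl hl le_rfl]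

theorem blockFlip_mul_self (hl : l < n) (b : Fin (2 ^ (n - 1 - l)) → Bool) :
    blockFlip hl b * blockFlip hl b = 1 :=
  Perm.ext (Function.Involutive.toPerm_involutive _)

theorem blockFlip_apply (hl : l < n) (b : Fin (2 ^ (n - 1 - l)) → Bool) (x : Fin (2 ^ n)) :
    blockFlip hl b x = if b (blockIdx hl x) then partner hl x else x :=
  rfl

theorem blockFlip_blockStart (hl : l < n) (b : Fin (2 ^ (n - 1 - l)) → Bool)
    (k : Fin (2 ^ (n - 1 - l))) :
    blockFlip hl b (blockStart hl k) =
      if b k then partner hl (blockStart hl k) else blockStart hl k := by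
  simp [blockFlip_apply]

theorem blockFlip_partner_blockStart (hl : l < n) (b : Fin (2 ^ (n - 1 - l)) → Bool)
    (k : Fin (2 ^ (n - 1 - l))) :
    blockFlip hl b (partner hl (blockStart hl k)) =
      if b k then blockStart hl k else partner hl (blockStart hl k) := by
  simp [blockFlip_apply, blockIdx_partner hl hl le_rfl]

theorem blockFlip_partner (hj : j < n) (hl : l < n) (hjl : j < l)
    (b : Fin (2 ^ (n - 1 - l)) → Bool) (x : Fin (2 ^ n)) :
    blockFlip hl b (partner hj x) = partner hj (blockFlip hl b x) := by
  rw [blockFlip_apply, blockFlip_apply, blockIdx_partner hj hl hjl.le]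
  split_ifs
  · exact partner_comm hl hj x
  · rfl

theorem blockFlip_mod (hl : l < n) (hjl : j < l) (b : Fin (2 ^ (n - 1 - l)) → Bool)
    (x : Fin (2 ^ n)) : (blockFlip hl b x : ℕ) % 2 ^ (j + 1) = x % 2 ^ (j + 1) := by
  rw [blockFlip_apply]
  split_ifs
  · exact partner_mod hl hjl x
  · rfl

theorem blockStart_mod (hl : l < n) (k : Fin (2 ^ (n - 1 - l))) :
    (blockStart hl k : ℕ) % 2 ^ (l + 1) = 0 :=
  Nat.mul_mod_left _ _

def LevelOrdered (hl : l < n) (π : Perm (Fin (2 ^ n))) : Prop :=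
  ∀ k, π (blockStart hl k) < π (partner hl (blockStart hl k))

theorem LevelOrdered.mul_blockFlip {π : Perm (Fin (2 ^ n))} (hj : j < n) (hl : l < n)
    (hjl : j < l) (b : Fin (2 ^ (n - 1 - l)) → Bool) (hπ : LevelOrdered hj π) :
    LevelOrdered hj (π * blockFlip hl b) := by
  intro k
  set y := blockFlip hl b (blockStart hj k)
  have hy : blockStart hj (blockIdx hj y) = y :=
    blockStart_blockIdx hj (by rw [blockFlip_mod hl hjl, blockStart_mod])
  simpa [blockFlip_partner hj hl hjl, hy] using hπ (blockIdx hj y)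

def orderedBelow (n m : ℕ) : Set (Perm (Fin (2 ^ n))) :=
  {π | ∀ j (hj : j < n), j < m → LevelOrdered hj π}

theorem sep_levelOrdered_orderedBelow {m : ℕ} (hm : m < n) :
    {π ∈ orderedBelow n m | LevelOrdered hm π} = orderedBelow n (m + 1) := by
  ext π
  simp only [orderedBelow, Set.mem_ofPred_eq, Nat.lt_succ_iff_lt_or_eq]
  constructor
  · rintro ⟨hbelow, hlevel⟩ j hj (hjm | rfl)
    exacts [hbelow j hj hjm, hlevel]
  · intro h
    exact ⟨fun j hj hjm => h j hj (.inl hjm), h m hm (.inr rfl)⟩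

theorem card_orderedBelow_eq_two_pow_mul {m : ℕ} (hm : m < n) :
    Nat.card (orderedBelow n m) = 2 ^ 2 ^ (n - 1 - m) * Nat.card (orderedBelow n (m + 1)) := by
  have hS : ∀ π ∈ orderedBelow n m, ∀ b, π * blockFlip hm b ∈ orderedBelow n m :=
    fun π hπ b j hj hjm => (hπ j hj hjm).mul_blockFlip hj hm hjm b
  rw [card_eq_two_pow_mul_card_ordered (blockStart_ne_partner hm) (blockFlip_mul_self hm)
    (blockFlip_blockStart hm) (blockFlip_partner_blockStart hm) hS, Nat.card_fin]
  exact congrArg (fun S : Set _ => 2 ^ 2 ^ (n - 1 - m) * Nat.card S)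
    (sep_levelOrdered_orderedBelow hm)

theorem card_orderedBelow_mul_two_pow {m : ℕ} (hm : m ≤ n) :
    Nat.card (orderedBelow n m) * 2 ^ (2 ^ n - 2 ^ (n - m)) = Nat.factorial (2 ^ n) := by
  induction m with
  | zero =>
    simp [orderedBelow, Nat.card_eq_fintype_card, Fintype.card_perm]
  | succ m ih =>
    have hmn : m < n := hm
    have hidx : n - 1 - m = n - (m + 1) := by omega
    have hsplit : 2 ^ (n - m) = 2 * 2 ^ (n - (m + 1)) := by
      rw [← pow_succ']; congr 1; omega
    have hle : 2 ^ (n - m) ≤ 2 ^ n := Nat.pow_le_pow_right two_pos (by omega)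
    have hexp : 2 ^ n - 2 ^ (n - (m + 1)) = 2 ^ (n - 1 - m) + (2 ^ n - 2 ^ (n - m)) := by
      rw [hidx]; omega
    rw [← ih hmn.le, card_orderedBelow_eq_two_pow_mul hmn, hexp, pow_add]
    ring

theorem levelOrdered_iff (hl : l < n) (π : Perm (Fin (2 ^ n))) :
    LevelOrdered hl π ↔ ∀ k : ℕ, k < 2 ^ (n - 1 - l) →
      ∀ (h1 : 2 * k * 2 ^ l < 2 ^ n) (h2 : (2 * k + 1) * 2 ^ l < 2 ^ n),
        π ⟨2 * k * 2 ^ l, h1⟩ < π ⟨(2 * k + 1) * 2 ^ l, h2⟩ := by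
  have hstart (k : Fin (2 ^ (n - 1 - l))) : (blockStart hl k : ℕ) = 2 * k * 2 ^ l := by
    simp only [blockStart, pow_succ]; ring
  have hpartner (k : Fin (2 ^ (n - 1 - l))) :
      (partner hl (blockStart hl k) : ℕ) = (2 * k + 1) * 2 ^ l := by
    show (k : ℕ) * 2 ^ (l + 1) ^^^ 2 ^ l = _
    rw [Nat.mul_two_pow_succ_xor_two_pow, pow_succ]; ring
  constructor
  · intro h k hk h1 h2
    convert h ⟨k, hk⟩ using 2 <;> exact Fin.ext (by simp [hstart, hpartner])
  · intro h k
    convert h k k.2 (hstart k ▸ (blockStart hl k).2) (hpartner k ▸ (partner hl _).2) using 2 <;>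
      exact Fin.ext (by simp [hstart, hpartner])

end SylowTransversal

theorem sylow_coset_count_general (n : ℕ) :
    Nat.card {π : Equiv.Perm (Fin (2 ^ n)) //
        ∀ l : ℕ, l < n → ∀ k : ℕ, k < 2 ^ (n - 1 - l) →
          ∀ (h1 : 2 * k * 2 ^ l < 2 ^ n) (h2 : (2 * k + 1) * 2 ^ l < 2 ^ n),
            π ⟨2 * k * 2 ^ l, h1⟩ < π ⟨(2 * k + 1) * 2 ^ l, h2⟩} =
      Nat.factorial (2 ^ n) / 2 ^ (2 ^ n - 1) := by
  have hcount := SylowTransversal.card_orderedBelow_mul_two_pow (le_refl n)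
  rw [Nat.sub_self, pow_zero] at hcount
  rw [← hcount, Nat.mul_div_cancel _ (by positivity)]
  exact Nat.card_congr <| Equiv.subtypeEquivRight fun π => by
    simp [SylowTransversal.orderedBelow, SylowTransversal.levelOrdered_iff]

/-- **Coset representatives of a Sylow 2-subgroup of `Sym(2^n)`**: the number of
permutations `π` of `{0, 1, …, 2^n - 1}` satisfying
`π(2k·2^l) < π((2k+1)·2^l)` for all `0 ≤ l ≤ n-1` and `0 ≤ k ≤ 2^{n-1-l} - 1`
(the 0-based version of the conditions of the paper) equals
`(2^n)! / 2^(2^n - 1)`, the index of a Sylow 2-subgroup of `Sym(2^n)`. -/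
theorem sylow_coset_count (n : ℕ) (hn : 1 ≤ n) :
    Nat.card {π : Equiv.Perm (Fin (2 ^ n)) //
        ∀ l : ℕ, l < n → ∀ k : ℕ, k < 2 ^ (n - 1 - l) →
          ∀ (h1 : 2 * k * 2 ^ l < 2 ^ n) (h2 : (2 * k + 1) * 2 ^ l < 2 ^ n),
            π ⟨2 * k * 2 ^ l, h1⟩ < π ⟨(2 * k + 1) * 2 ^ l, h2⟩} =
      Nat.factorial (2 ^ n) / 2 ^ (2 ^ n - 1) :=
  sylow_coset_count_general n
end
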